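/- arXiv:2101.07126 — 2 statements merged into one kernel-verified Lean document; each statement's English description precedes it below -/
import Mathlib

section
/- Let ℓ_1, …, ℓ_n, ℓ_{n+1} be lines in ℝ², each given as the zero set of a non-constant affine functional. Then the number of connected components of ℝ² \ (ℓ_1 ∪ ⋯ ∪ ℓ_{n+1}) is at most the number of connected components of ℝ² \ (ℓ_1 ∪ ⋯ ∪ ℓ_n) plus n + 1. -/
open Real

/-- The complement in `ℝ²` of the union of the `n` lines
`{x | a i 0 * x 0 + a i 1 * x 1 + b i = 0}`. -/
def lineCompl (n : ℕ) (a : Fin n → Fin 2 → ℝ) (b : Fin n → ℝ) : Set (Fin 2 → ℝ) :=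
  {x | ∀ i, a i 0 * x 0 + a i 1 * x 1 + b i ≠ 0}

/-- The set of connected components of a subset `S` of `ℝ²`. -/
def componentsIn (S : Set (Fin 2 → ℝ)) : Set (Set (Fin 2 → ℝ)) :=
  {C | ∃ x ∈ S, C = connectedComponentIn S x}

/-!
The complement of an arrangement splits into the convex open cells on which every functional has
a fixed sign; a convex cell is connected, and a sign cannot change along a connected subset of the
complement, so the components are exactly the nonempty cells and are counted by the realised sign
vectors. Forgetting the sign of the new functional is at most two-to-one on sign vectors, and a
sign vector `t` of the old lines has two preimages only if its cell meets both sides of the new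
line, hence, being convex, meets the line itself. So the number of new components is at most the
number of sign vectors realised on the new line by the old functionals, i.e. by `n` affine
functions of one real variable, and the same counting argument one dimension down bounds these by
`n + 1`.
-/

open Set

section Combinatorics

variable {m : ℕ}

def bothExtensions (V : Set (Fin (m + 1) → Bool)) : Set (Fin m → Bool) :=
  {t | Fin.snoc t true ∈ V ∧ Fin.snoc t false ∈ V}

theorem ncard_le_ncard_image_init_add_ncard_bothExtensions (V : Set (Fin (m + 1) → Bool)) :
    V.ncard ≤ (Fin.init '' V).ncard + (bothExtensions V).ncard := by
  set A : Bool → Set (Fin m → Bool) := fun c => {t | Fin.snoc t c ∈ V}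
  set e : Bool → (Fin m → Bool) → (Fin (m + 1) → Bool) := fun c t => Fin.snoc t c
  have he : ∀ c, (e c).Injective := fun c => Fin.snoc_left_injective (α := fun _ => Bool) c
  have hV : V ⊆ e true '' A true ∪ e false '' A false := by
    intro s hs
    obtain ⟨t, c, rfl⟩ : ∃ t c, s = Fin.snoc t c := ⟨_, _, (Fin.snoc_init_self s).symm⟩
    cases c
    · exact Or.inr ⟨t, hs, rfl⟩
    · exact Or.inl ⟨t, hs, rfl⟩
  have hunion : A true ∪ A false = Fin.init '' V := by
    ext t
    constructor
    · rintro (ht | ht)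
      · exact ⟨Fin.snoc t true, ht, Fin.init_snoc _ _⟩
      · exact ⟨Fin.snoc t false, ht, Fin.init_snoc _ _⟩
    · rintro ⟨s, hs, rfl⟩
      obtain ⟨t, c, rfl⟩ : ∃ t c, s = Fin.snoc t c := ⟨_, _, (Fin.snoc_init_self s).symm⟩
      rw [Fin.init_snoc]
      cases c
      · exact Or.inr hs
      · exact Or.inl hs
  have hinter : A true ∩ A false = bothExtensions V := rfl
  calc V.ncard
      ≤ (e true '' A true ∪ e false '' A false).ncard := ncard_le_ncard hV
    _ ≤ (e true '' A true).ncard + (e false '' A false).ncard := ncard_union_le _ _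
    _ = (A true).ncard + (A false).ncard := by
        rw [ncard_image_of_injective _ (he true), ncard_image_of_injective _ (he false)]
    _ = (Fin.init '' V).ncard + (bothExtensions V).ncard := by
        rw [← ncard_union_add_ncard_inter, hunion, hinter]

end Combinatorics

section SignVectors

variable {ι X : Type*} [AddCommGroup X] [Module ℝ X]

def arrangementCompl (F : ι → X →ᵃ[ℝ] ℝ) : Set X :=
  {x | ∀ i, F i x ≠ 0}

-- A zero value also gets `false`: sign vectors are only read off on `arrangementCompl F`.
noncomputable def signVector (F : ι → X →ᵃ[ℝ] ℝ) (x : X) : ι → Bool :=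
  fun i => decide (0 < F i x)

noncomputable def signVectors (F : ι → X →ᵃ[ℝ] ℝ) (S : Set X) : Set (ι → Bool) :=
  signVector F '' (S ∩ arrangementCompl F)

noncomputable def signCell (F : ι → X →ᵃ[ℝ] ℝ) (t : ι → Bool) : Set X :=
  arrangementCompl F ∩ signVector F ⁻¹' {t}

theorem ne_zero_and_decide_pos_eq_iff {r : ℝ} {c : Bool} :
    r ≠ 0 ∧ decide (0 < r) = c ↔ r ∈ if c then Ioi 0 else Iio 0 := by
  cases c
  · simp only [decide_eq_false_iff_not, not_lt, Bool.false_eq_true, ite_false, mem_Iio]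
    exact ⟨fun h => lt_of_le_of_ne h.2 h.1, fun h => ⟨h.ne, h.le⟩⟩
  · simp only [decide_eq_true_eq, ite_true, mem_Ioi]
    exact ⟨And.right, fun h => ⟨h.ne', h⟩⟩

theorem signCell_eq_iInter (F : ι → X →ᵃ[ℝ] ℝ) (t : ι → Bool) :
    signCell F t = ⋂ i, F i ⁻¹' (if t i then Ioi 0 else Iio 0) := by
  ext x
  simp only [mem_iInter, mem_preimage, ← ne_zero_and_decide_pos_eq_iff, forall_and]
  exact and_congr Iff.rfl funext_iff

theorem convex_signCell (F : ι → X →ᵃ[ℝ] ℝ) (t : ι → Bool) : Convex ℝ (signCell F t) := by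
  rw [signCell_eq_iInter]
  refine convex_iInter fun i => ?_
  split_ifs
  · exact (convex_Ioi 0).affine_preimage _
  · exact (convex_Iio 0).affine_preimage _

theorem signVectors_subset_signVectors_comp {Y : Type*} [AddCommGroup Y] [Module ℝ Y]
    (F : ι → X →ᵃ[ℝ] ℝ) (γ : Y →ᵃ[ℝ] X) {S : Set X} (hS : S ⊆ range γ) :
    signVectors F S ⊆ signVectors (fun i => (F i).comp γ) univ := by
  rintro _ ⟨x, ⟨hxS, hx⟩, rfl⟩
  obtain ⟨y, rfl⟩ := hS hxS
  exact ⟨y, ⟨trivial, hx⟩, rfl⟩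

variable {m : ℕ}

theorem ncard_signVectors_le (F : Fin (m + 1) → X →ᵃ[ℝ] ℝ) (S : Set X) :
    (signVectors F S).ncard ≤
      (signVectors (Fin.init F) S).ncard + (bothExtensions (signVectors F S)).ncard := by
  have hinit : Fin.init '' signVectors F S ⊆ signVectors (Fin.init F) S := by
    rintro _ ⟨_, ⟨x, ⟨hxS, hx⟩, rfl⟩, rfl⟩
    exact ⟨x, ⟨hxS, fun i => hx _⟩, rfl⟩
  exact (ncard_le_ncard_image_init_add_ncard_bothExtensions _).trans
    (add_le_add (ncard_le_ncard hinit) le_rfl)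

theorem bothExtensions_signVectors_subset (F : Fin (m + 1) → X →ᵃ[ℝ] ℝ) {S : Set X}
    (hS : Convex ℝ S) :
    bothExtensions (signVectors F S) ⊆
      signVectors (Fin.init F) (S ∩ {x | F (Fin.last m) x = 0}) := by
  rintro t ⟨⟨x, ⟨hxS, hx⟩, hxt⟩, ⟨y, ⟨hyS, hy⟩, hyt⟩⟩
  have hpos : 0 < F (Fin.last m) x := by
    simpa [signVector] using congrFun hxt (Fin.last m)
  have hneg : F (Fin.last m) y < 0 := by
    have := congrFun hyt (Fin.last m)
    simp only [signVector, Fin.snoc_last, decide_eq_false_iff_not, not_lt] at this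
    exact this.lt_of_ne (hy _)
  have hxR : x ∈ signCell (Fin.init F) t :=
    ⟨fun i => hx _, (congrArg Fin.init hxt).trans (Fin.init_snoc _ _)⟩
  have hyR : y ∈ signCell (Fin.init F) t :=
    ⟨fun i => hy _, (congrArg Fin.init hyt).trans (Fin.init_snoc _ _)⟩
  set θ := F (Fin.last m) x / (F (Fin.last m) x - F (Fin.last m) y)
  have hθ : θ ∈ Icc (0 : ℝ) 1 :=
    ⟨div_nonneg hpos.le (by linarith), (div_le_one (by linarith)).2 (by linarith)⟩
  have hz : F (Fin.last m) (AffineMap.lineMap x y θ) = 0 := by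
    rw [AffineMap.apply_lineMap, AffineMap.lineMap_apply_ring']
    simp only [θ]
    field_simp [(by linarith : F (Fin.last m) x - F (Fin.last m) y ≠ 0)]
    ring
  have hzR := (convex_signCell _ t).lineMap_mem hxR hyR hθ
  exact ⟨_, ⟨⟨hS.lineMap_mem hxS hyS hθ, hz⟩, hzR.1⟩, hzR.2⟩

end SignVectors

theorem AffineMap.injective_of_apply_ne {k : Type*} [Field k] {f : k →ᵃ[k] k} {x y : k}
    (h : f x ≠ f y) :
    Function.Injective f := by
  have hf : ∀ t, f t - f 0 = t * f.linear 1 := fun t => by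
    rw [← vsub_eq_sub, ← AffineMap.linearMap_vsub, vsub_eq_sub, sub_zero, ← smul_eq_mul,
      ← map_smul, smul_eq_mul, mul_one]
  have hc : f.linear 1 ≠ 0 := fun hc => h (by linear_combination hf x - hf y + (x - y) * hc)
  intro u v huv
  refine mul_right_cancel₀ hc ?_
  rw [← hf, ← hf, huv]

theorem ncard_signVectors_real_le {m : ℕ} (G : Fin m → ℝ →ᵃ[ℝ] ℝ) :
    (signVectors G univ).ncard ≤ m + 1 := by
  induction m with
  | zero => exact ncard_le_one_of_subsingleton _
  | succ m ih =>
    have hboth : (bothExtensions (signVectors G univ)).ncard ≤ 1 := by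
      refine (ncard_le_one (toFinite _)).2 fun t ht t' ht' => ?_
      obtain ⟨x, ⟨-, hx⟩, -⟩ := ht.1
      obtain ⟨z, ⟨⟨-, hz⟩, -⟩, rfl⟩ := bothExtensions_signVectors_subset G convex_univ ht
      obtain ⟨z', ⟨⟨-, hz'⟩, -⟩, rfl⟩ := bothExtensions_signVectors_subset G convex_univ ht'
      have hinj := AffineMap.injective_of_apply_ne ((hx (Fin.last m)).trans_eq hz.symm)
      rw [hinj (hz.trans hz'.symm)]
    calc (signVectors G univ).ncard
        ≤ (signVectors (Fin.init G) univ).ncard + (bothExtensions (signVectors G univ)).ncard :=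
          ncard_signVectors_le G univ
      _ ≤ m + 1 + 1 := add_le_add (ih _) hboth

theorem IsPreconnected.pos_iff_pos {X : Type*} [TopologicalSpace X] {s : Set X}
    (hs : IsPreconnected s) {f : X → ℝ} (hf : ContinuousOn f s) (h0 : ∀ z ∈ s, f z ≠ 0)
    {x y : X} (hx : x ∈ s) (hy : y ∈ s) :
    0 < f x ↔ 0 < f y := by
  have key : ∀ {u v}, u ∈ s → v ∈ s → 0 < f u → 0 < f v := by
    intro u v hu hv hpos
    by_contra! hneg
    obtain ⟨w, hw, hw0⟩ := hs.intermediate_value hv hu hf ⟨hneg, hpos.le⟩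
    exact h0 w hw hw0
  exact ⟨key hx hy, key hy hx⟩

section Components

variable {ι X : Type*} [AddCommGroup X] [Module ℝ X] [TopologicalSpace X] [ContinuousAdd X]
  [ContinuousSMul ℝ X]

theorem connectedComponentIn_arrangementCompl {F : ι → X →ᵃ[ℝ] ℝ} (hF : ∀ i, Continuous (F i))
    {x : X} (hx : x ∈ arrangementCompl F) :
    connectedComponentIn (arrangementCompl F) x = signCell F (signVector F x) := by
  refine Subset.antisymm (fun y hy => ?_) ?_
  · have hyA := connectedComponentIn_subset _ _ hy
    refine ⟨hyA, funext fun i => ?_⟩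
    simp only [signVector, decide_eq_decide]
    exact isPreconnected_connectedComponentIn.pos_iff_pos (hF i).continuousOn
      (fun z hz => (connectedComponentIn_subset _ _ hz : z ∈ arrangementCompl F) i) hy
      (mem_connectedComponentIn hx)
  · exact (convex_signCell F _).isPreconnected
      |>.subset_connectedComponentIn ⟨hx, rfl⟩ inter_subset_left

theorem image_connectedComponentIn_arrangementCompl {F : ι → X →ᵃ[ℝ] ℝ}
    (hF : ∀ i, Continuous (F i)) :
    connectedComponentIn (arrangementCompl F) '' arrangementCompl F =
      signCell F '' signVectors F univ := by
  rw [signVectors, univ_inter, image_image]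
  exact image_congr fun x hx => connectedComponentIn_arrangementCompl hF hx

theorem finite_image_connectedComponentIn_arrangementCompl [Finite ι] {F : ι → X →ᵃ[ℝ] ℝ}
    (hF : ∀ i, Continuous (F i)) :
    (connectedComponentIn (arrangementCompl F) '' arrangementCompl F).Finite := by
  rw [image_connectedComponentIn_arrangementCompl hF]
  exact (toFinite _).image _

theorem ncard_image_connectedComponentIn_arrangementCompl {F : ι → X →ᵃ[ℝ] ℝ}
    (hF : ∀ i, Continuous (F i)) :
    (connectedComponentIn (arrangementCompl F) '' arrangementCompl F).ncard =
      (signVectors F univ).ncard := by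
  rw [image_connectedComponentIn_arrangementCompl hF]
  refine InjOn.ncard_image ?_
  rintro _ ⟨x, ⟨-, hx⟩, rfl⟩ _ ⟨y, -, rfl⟩ h
  exact (h.le ⟨hx, rfl⟩).2

end Components

def lineFunctional (a : Fin 2 → ℝ) (b : ℝ) : (Fin 2 → ℝ) →ᵃ[ℝ] ℝ where
  toFun x := a 0 * x 0 + a 1 * x 1 + b
  linear := a 0 • LinearMap.proj 0 + a 1 • LinearMap.proj 1
  map_vadd' x v := by simp; ring

theorem exists_setOf_lineFunctional_eq_zero_subset_range {a : Fin 2 → ℝ} (ha : a ≠ 0)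
    (b : ℝ) : ∃ γ : ℝ →ᵃ[ℝ] (Fin 2 → ℝ), {x | lineFunctional a b x = 0} ⊆ range γ := by
  have hQ : a 0 ^ 2 + a 1 ^ 2 ≠ 0 := by
    intro h
    refine ha (funext fun i => ?_)
    fin_cases i <;> simp <;> nlinarith [sq_nonneg (a 0), sq_nonneg (a 1)]
  -- `p` is the point of the line nearest the origin and `![-a 1, a 0]` spans its direction.
  set p : Fin 2 → ℝ := (-b / (a 0 ^ 2 + a 1 ^ 2)) • a
  refine ⟨AffineMap.lineMap p (p + ![-a 1, a 0]), fun x hx => ?_⟩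
  replace hx : a 0 * x 0 + a 1 * x 1 + b = 0 := hx
  refine ⟨(a 0 * x 1 - a 1 * x 0) / (a 0 ^ 2 + a 1 ^ 2), funext fun i => ?_⟩
  fin_cases i <;> simp [AffineMap.lineMap_apply_module', p] <;> field_simp
  · linear_combination (-a 0) * hx
  · linear_combination (-a 1) * hx

theorem componentsIn_eq_image (S : Set (Fin 2 → ℝ)) :
    componentsIn S = connectedComponentIn S '' S := by
  ext C
  simp [componentsIn, eq_comm]

/-- Adding an `(n+1)`-st line to an arrangement of `n` lines adds at most `n + 1`
connected components to the complement. -/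
theorem line_arrangement_inductive_step (n : ℕ) (a : Fin (n + 1) → Fin 2 → ℝ)
    (b : Fin (n + 1) → ℝ) (ha : ∀ i, a i ≠ 0) :
    (componentsIn (lineCompl (n + 1) a b)).Finite ∧
    (componentsIn (lineCompl (n + 1) a b)).ncard ≤
      (componentsIn (lineCompl n (fun i => a i.castSucc) (fun i => b i.castSucc))).ncard
        + (n + 1) := by
  set F : Fin (n + 1) → (Fin 2 → ℝ) →ᵃ[ℝ] ℝ := fun i => lineFunctional (a i) (b i)
  have hcont : ∀ {k} (G : Fin k → (Fin 2 → ℝ) →ᵃ[ℝ] ℝ) (i : Fin k), Continuous (G i) :=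
    fun G i => (G i).continuous_of_finiteDimensional
  have hcompl : lineCompl (n + 1) a b = arrangementCompl F := rfl
  have hcompl' : lineCompl n (fun i => a i.castSucc) (fun i => b i.castSucc) =
      arrangementCompl (Fin.init F) := rfl
  obtain ⟨γ, hγ⟩ := exists_setOf_lineFunctional_eq_zero_subset_range (ha (Fin.last n))
    (b (Fin.last n))
  rw [hcompl, hcompl', componentsIn_eq_image, componentsIn_eq_image,
    ncard_image_connectedComponentIn_arrangementCompl (hcont F),
    ncard_image_connectedComponentIn_arrangementCompl (hcont (Fin.init F))]
  refine ⟨finite_image_connectedComponentIn_arrangementCompl (hcont F), ?_⟩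
  calc (signVectors F univ).ncard
      ≤ (signVectors (Fin.init F) univ).ncard + (bothExtensions (signVectors F univ)).ncard :=
        ncard_signVectors_le F univ
    _ ≤ (signVectors (Fin.init F) univ).ncard +
          (signVectors (fun i => (Fin.init F i).comp γ) univ).ncard := by
        refine add_le_add le_rfl (ncard_le_ncard ?_)
        exact (bothExtensions_signVectors_subset F convex_univ).trans
          (signVectors_subset_signVectors_comp _ γ fun x hx => hγ hx.2)
    _ ≤ (signVectors (Fin.init F) univ).ncard + (n + 1) := by
        gcongr
        exact ncard_signVectors_real_le _
end

section
/- Let w ≥ 1, A ∈ ℝ^(w×2), b ∈ ℝ^w, and let σ denote the componentwise ReLU. Then there exist at most 1 + w(w+1)/2 convex sets whose union is ℝ² such that the map x ↦ σ(Ax + b) agrees with an affine map ℝ² → ℝ^w on each of them. -/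
/-!
On each set where the sign pattern of `A x + b` is constant, `σ(A x + b)` agrees with an affine
map, and these sets are convex; so it suffices to count the realisable sign patterns of `k` affine
functions on a space of dimension `d`. Deleting the last function `g` merges only those patterns of
the others that occur on both sides of `{g = 0}`, hence (by convexity of the cells) on `{g = 0}`
itself, a space of dimension `d - 1`. Pascal's rule then gives the bound `∑_{i ≤ d} C(k, i)`,
which is `1 + w(w+1)/2` for `d = 2`.
-/

open Real

/-- Componentwise ReLU. -/
noncomputable def relu {n : ℕ} (z : Fin n → ℝ) : Fin n → ℝ := fun j => max (z j) 0

open Module Set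

theorem sum_range_succ_choose_succ (k d : ℕ) :
    ∑ i ∈ Finset.range (d + 1), (k + 1).choose i =
      ∑ i ∈ Finset.range (d + 1), k.choose i + ∑ i ∈ Finset.range d, k.choose i := by
  induction d with
  | zero => simp
  | succ d ih =>
    rw [Finset.sum_range_succ, ih, Nat.choose_succ_succ, Finset.sum_range_succ _ (d + 1),
      Finset.sum_range_succ _ d]
    ring

theorem sum_range_three_choose (n : ℕ) :
    ∑ i ∈ Finset.range 3, n.choose i = 1 + n * (n + 1) / 2 := by
  have hpascal : (n + 1).choose 2 = n.choose 1 + n.choose 2 := Nat.choose_succ_succ n 1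
  rw [Nat.choose_two_right, Nat.add_sub_cancel, mul_comm] at hpascal
  simp only [Finset.sum_range_succ, Finset.sum_range_zero, Nat.choose_zero_right]
  omega

section SignPattern

variable {E : Type*} [AddCommGroup E] [Module ℝ E]

noncomputable def signPattern {ι : Type*} (f : ι → E →ᵃ[ℝ] ℝ) (x : E) : ι → Bool :=
  fun i => decide (0 < f i x)

theorem convex_signPattern_preimage {ι : Type*} (f : ι → E →ᵃ[ℝ] ℝ) (s : ι → Bool) :
    Convex ℝ (signPattern f ⁻¹' {s}) := by
  have hcells : signPattern f ⁻¹' {s} = ⋂ i, f i ⁻¹' {r | decide (0 < r) = s i} := by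
    ext x
    simp [signPattern, funext_iff]
  rw [hcells]
  refine convex_iInter fun i => Convex.affine_preimage (f i) ?_
  cases s i
  · simp only [decide_eq_false_iff_not, not_lt]
    exact convex_Iic (0 : ℝ)
  · simp only [decide_eq_true_eq]
    exact convex_Ioi (0 : ℝ)

theorem AffineMap.exists_mem_segment_eq_zero (g : E →ᵃ[ℝ] ℝ) {x y : E} (hx : 0 ≤ g x)
    (hy : g y ≤ 0) : ∃ z ∈ segment ℝ x y, g z = 0 := by
  have hcont : ContinuousOn (fun t : ℝ => g (AffineMap.lineMap x y t)) (Icc 0 1) := by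
    simp_rw [AffineMap.apply_lineMap]
    exact AffineMap.lineMap_continuous.continuousOn
  obtain ⟨t, ht, hzero⟩ := intermediate_value_Icc' zero_le_one hcont
    ⟨by simpa using hy, by simpa using hx⟩
  exact ⟨AffineMap.lineMap x y t, segment_eq_image_lineMap ℝ x y ▸ ⟨t, ht, rfl⟩, hzero⟩

theorem AffineMap.finrank_ker_linear_lt [FiniteDimensional ℝ E] (g : E →ᵃ[ℝ] ℝ) {x y : E}
    (h : g x ≠ g y) : finrank ℝ (LinearMap.ker g.linear) < finrank ℝ E := by
  refine Submodule.finrank_lt fun htop => h ?_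
  have hker : x -ᵥ y ∈ LinearMap.ker g.linear := htop ▸ Submodule.mem_top
  rw [LinearMap.mem_ker, g.linearMap_vsub] at hker
  exact sub_eq_zero.mp hker

theorem exists_ker_range_signPattern_supset {ι : Type*} (F : ι → E →ᵃ[ℝ] ℝ) (g : E →ᵃ[ℝ] ℝ)
    {p : E} (hp : g p = 0) : ∃ F' : ι → LinearMap.ker g.linear →ᵃ[ℝ] ℝ,
      signPattern F '' {z | g z = 0} ⊆ range (signPattern F') := by
  let param : LinearMap.ker g.linear →ᵃ[ℝ] E :=
    (LinearMap.ker g.linear).subtype.toAffineMap + AffineMap.const ℝ _ p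
  refine ⟨fun i => (F i).comp param, ?_⟩
  rintro _ ⟨z, hz, rfl⟩
  have hker : z -ᵥ p ∈ LinearMap.ker g.linear := by
    rw [LinearMap.mem_ker, g.linearMap_vsub, hz, hp, vsub_self]
  have hparam : param ⟨z -ᵥ p, hker⟩ = z := by simp [param]
  exact ⟨⟨z -ᵥ p, hker⟩, congrArg (signPattern F) hparam⟩

theorem ncard_le_ncard_image_init_add {k : ℕ} (R : Set (Fin (k + 1) → Bool)) :
    R.ncard ≤ (Fin.init '' R).ncard +
      {t : Fin k → Bool | Fin.snoc t true ∈ R ∧ Fin.snoc t false ∈ R}.ncard := by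
  set A := {t : Fin k → Bool | Fin.snoc t true ∈ R}
  set B := {t : Fin k → Bool | Fin.snoc t false ∈ R}
  have hR : R ⊆ (Fin.snoc · true) '' A ∪ (Fin.snoc · false) '' B := by
    intro s hs
    obtain ⟨t, c, rfl⟩ : ∃ t c, s = Fin.snoc t c := ⟨_, _, (Fin.snoc_init_self s).symm⟩
    cases c
    · exact Or.inr ⟨_, hs, rfl⟩
    · exact Or.inl ⟨_, hs, rfl⟩
  have hAB : A ∪ B ⊆ Fin.init '' R := by
    rintro t (ht | ht) <;> exact ⟨_, ht, Fin.init_snoc _ _⟩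
  calc R.ncard ≤ ((Fin.snoc · true) '' A ∪ (Fin.snoc · false) '' B).ncard := ncard_le_ncard hR
    _ ≤ A.ncard + B.ncard := (ncard_union_le _ _).trans (add_le_add ncard_image_le ncard_image_le)
    _ = (A ∪ B).ncard + (A ∩ B).ncard := (ncard_union_add_ncard_inter A B).symm
    _ ≤ _ := Nat.add_le_add_right (ncard_le_ncard hAB) _

theorem mem_image_signPattern_init_zeroSet {k : ℕ} (f : Fin (k + 1) → E →ᵃ[ℝ] ℝ)
    {t : Fin k → Bool} (htrue : Fin.snoc t true ∈ range (signPattern f))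
    (hfalse : Fin.snoc t false ∈ range (signPattern f)) :
    t ∈ signPattern (Fin.init f) '' {z | f (Fin.last k) z = 0} := by
  obtain ⟨x, hx⟩ := htrue
  obtain ⟨y, hy⟩ := hfalse
  have hxt : signPattern (Fin.init f) x = t := (congrArg Fin.init hx).trans (Fin.init_snoc _ _)
  have hyt : signPattern (Fin.init f) y = t := (congrArg Fin.init hy).trans (Fin.init_snoc _ _)
  have hxpos : 0 < f (Fin.last k) x := by
    simpa [signPattern] using congrFun hx (Fin.last k)
  have hyneg : f (Fin.last k) y ≤ 0 := by
    simpa [signPattern] using congrFun hy (Fin.last k)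
  obtain ⟨z, hzseg, hz⟩ := (f (Fin.last k)).exists_mem_segment_eq_zero hxpos.le hyneg
  exact ⟨z, hz, convex_signPattern_preimage (Fin.init f) t |>.segment_subset hxt hyt hzseg⟩

theorem ncard_range_signPattern_le [FiniteDimensional ℝ E] {d : ℕ} (hd : finrank ℝ E ≤ d)
    {k : ℕ} (f : Fin k → E →ᵃ[ℝ] ℝ) :
    (range (signPattern f)).ncard ≤ ∑ i ∈ Finset.range (d + 1), k.choose i := by
  induction k generalizing E d with
  | zero =>
    calc (range (signPattern f)).ncard ≤ 1 := ncard_le_one_of_subsingleton _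
      _ = _ := by simp [Finset.sum_range_succ']
  | succ k ih =>
    have hsplit := ncard_le_ncard_image_init_add (range (signPattern f))
    set D := {t : Fin k → Bool |
      Fin.snoc t true ∈ range (signPattern f) ∧ Fin.snoc t false ∈ range (signPattern f)}
    rw [← range_comp] at hsplit
    rw [sum_range_succ_choose_succ]
    refine hsplit.trans (add_le_add (ih hd (Fin.init f)) ?_)
    rcases D.eq_empty_or_nonempty with hD | ⟨t, htrue, hfalse⟩
    · rw [hD, ncard_empty]
      exact Nat.zero_le _
    obtain ⟨x, hx⟩ := htrue
    obtain ⟨p, hp, -⟩ := mem_image_signPattern_init_zeroSet f ⟨x, hx⟩ hfalse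
    have hxpos : 0 < f (Fin.last k) x := by
      simpa [signPattern] using congrFun hx (Fin.last k)
    have hdim := (f (Fin.last k)).finrank_ker_linear_lt (x := x) (y := p)
      (by rw [hp]; exact hxpos.ne')
    obtain ⟨F', hF'⟩ := exists_ker_range_signPattern_supset (Fin.init f) (f (Fin.last k)) hp
    calc D.ncard ≤ (range (signPattern F')).ncard :=
          ncard_le_ncard fun t ht => hF' (mem_image_signPattern_init_zeroSet f ht.1 ht.2)
      _ ≤ ∑ i ∈ Finset.range (d - 1 + 1), k.choose i := ih (by omega) F'
      _ = ∑ i ∈ Finset.range d, k.choose i := by rw [Nat.sub_add_cancel (by omega)]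

theorem relu_eq_of_signPattern_eq {w : ℕ} (L : E →ᵃ[ℝ] (Fin w → ℝ)) {x : E} {s : Fin w → Bool}
    (hs : signPattern (fun j => (AffineMap.proj j).comp L) x = s) :
    relu (L x) = AffineMap.pi (fun j => if s j then (AffineMap.proj j).comp L else 0) x := by
  subst hs
  funext j
  by_cases h : 0 < L x j
  · simp [relu, signPattern, h, h.le]
  · simp [relu, signPattern, h, not_lt.mp h]

end SignPattern

theorem relu_layer_pieces_general (w : ℕ) (A : Matrix (Fin w) (Fin 2) ℝ)
    (b : Fin w → ℝ) :
    ∃ (N : ℕ), N ≤ 1 + w * (w + 1) / 2 ∧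
      ∃ (C : Fin N → Set (Fin 2 → ℝ)) (g : Fin N → ((Fin 2 → ℝ) →ᵃ[ℝ] (Fin w → ℝ))),
        (∀ i, Convex ℝ (C i)) ∧ (⋃ i, C i) = Set.univ ∧
        ∀ i, ∀ x ∈ C i, relu (A.mulVec x + b) = g i x := by
  let L : (Fin 2 → ℝ) →ᵃ[ℝ] (Fin w → ℝ) := A.mulVecLin.toAffineMap + AffineMap.const ℝ _ b
  let f : Fin w → (Fin 2 → ℝ) →ᵃ[ℝ] ℝ := fun j => (AffineMap.proj j).comp L
  let e := (Finite.equivFin (range (signPattern f))).symm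
  refine ⟨Nat.card (range (signPattern f)), ?_, fun i => signPattern f ⁻¹' {(e i : Fin w → Bool)},
    fun i => AffineMap.pi fun j => if (e i : Fin w → Bool) j then f j else 0,
    fun i => convex_signPattern_preimage f _, ?_, fun i x hx => relu_eq_of_signPattern_eq L hx⟩
  · rw [Nat.card_coe_set_eq, ← sum_range_three_choose]
    exact ncard_range_signPattern_le (finrank_fin_fun ℝ).le f
  · exact eq_univ_of_forall fun x => mem_iUnion.2 ⟨e.symm ⟨_, x, rfl⟩, by
      rw [mem_preimage, e.apply_symm_apply]; rfl⟩

/-- One ReLU layer on `ℝ²` is piecewise affine with at most `1 + w(w+1)/2` convex pieces. -/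
theorem relu_layer_pieces (w : ℕ) (hw : 1 ≤ w) (A : Matrix (Fin w) (Fin 2) ℝ)
    (b : Fin w → ℝ) :
    ∃ (N : ℕ), N ≤ 1 + w * (w + 1) / 2 ∧
      ∃ (C : Fin N → Set (Fin 2 → ℝ)) (g : Fin N → ((Fin 2 → ℝ) →ᵃ[ℝ] (Fin w → ℝ))),
        (∀ i, Convex ℝ (C i)) ∧ (⋃ i, C i) = Set.univ ∧
        ∀ i, ∀ x ∈ C i, relu (A.mulVec x + b) = g i x :=
  relu_layer_pieces_general w A b
end
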